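/- Let G be an n-vertex graph with minimum degree at least δ ≥ 1 whose maximum independent set I has size n−k with k ≥ δ+1. Let J = V(G)\I with vertices ordered by the number a_1 ≥ a_2 ≥ ... ≥ a_k of their neighbors in I. Then a_δ ≥ (n−k)/(k−δ+1). -/
import Mathlib


/-- A finset of vertices is independent: no edge inside. -/
def SimpleGraph.IsIndepFinset {V : Type*} (G : SimpleGraph V) (s : Finset V) : Prop :=
  ∀ v ∈ s, ∀ w ∈ s, ¬ G.Adj v w

/-- `indepCount G t` = number of independent sets of size `t` in `G`. -/
noncomputable def indepCount {V : Type*} [Fintype V] (G : SimpleGraph V) (t : ℕ) : ℕ :=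
  Nat.card {s : Finset V // s.card = t ∧ G.IsIndepFinset s}

/-- `indepTotal G` = total number of independent sets in `G` (including ∅). -/
noncomputable def indepTotal {V : Type*} [Fintype V] (G : SimpleGraph V) : ℕ :=
  Nat.card {s : Finset V // G.IsIndepFinset s}

open Classical in
/-- The independence polynomial `P(G,x) = Σ_t i_t(G) xᵗ`. -/
noncomputable def indPoly {V : Type*} [Fintype V] (G : SimpleGraph V) (x : ℝ) : ℝ :=
  ∑ s ∈ Finset.univ.filter (fun s : Finset V => G.IsIndepFinset s), x ^ s.card

open Finset in
open Finset in
lemma filter_lt_card' (k d : ℕ) (hdk : d ≤ k) :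
    ((Finset.univ : Finset (Fin k)).filter (fun i => i.val < d)).card = d := by
  have h : (Finset.univ : Finset (Fin k)).filter (fun i => i.val < d)
      = (Finset.univ : Finset (Fin d)).map (Fin.castLEEmb hdk) := by
    ext i
    simp only [mem_filter, mem_univ, true_and, mem_map]
    constructor
    · intro hi
      exact ⟨⟨i.val, hi⟩, rfl⟩
    · rintro ⟨j, -, rfl⟩
      simpa using j.isLt
  rw [h]
  simp

theorem degree_to_I_bound {V : Type*} [Fintype V] [DecidableEq V]
    (G : SimpleGraph V) [DecidableRel G.Adj] (n k δ : ℕ)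
    (hcard : Fintype.card V = n) (hδ : 1 ≤ δ) (hk : δ + 1 ≤ k) (hkn : k ≤ n)
    (hdeg : ∀ v : V, δ ≤ G.degree v)
    (I : Finset V) (hI : G.IsIndepFinset I) (hIcard : I.card = n - k)
    (hmax : ∀ s : Finset V, G.IsIndepFinset s → s.card ≤ n - k)
    (v : Fin k → V) (hinj : Function.Injective v)
    (hrange : ∀ i, v i ∈ Finset.univ \ I)
    (a : Fin k → ℕ) (ha : ∀ i, a i = (G.neighborFinset (v i) ∩ I).card)
    (hmono : Antitone a) :
    ((n : ℝ) - k) / ((k : ℝ) - δ + 1) ≤ a ⟨δ - 1, by omega⟩ := by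
  classical
  set idx : Fin k := ⟨δ - 1, by omega⟩ with hidx
  have hJcard : (Finset.univ \ I).card = k := by
    rw [Finset.card_sdiff_of_subset (Finset.subset_univ _), Finset.card_univ, hcard, hIcard]; omega
  have himg : Finset.image v Finset.univ = Finset.univ \ I := by
    apply Finset.eq_of_subset_of_card_le
    · intro w hw
      obtain ⟨i, -, rfl⟩ := Finset.mem_image.mp hw
      exact hrange i
    · rw [hJcard, Finset.card_image_of_injective _ hinj, Finset.card_univ, Fintype.card_fin]
  set F := Finset.univ.filter (fun i : Fin k => δ - 1 ≤ i.val) with hF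
  have hFcard : F.card = k - (δ - 1) := by
    have hFeq : F = Finset.univ \ (Finset.univ.filter (fun i : Fin k => i.val < δ - 1)) := by
      ext i
      simp only [hF, Finset.mem_filter, Finset.mem_sdiff, Finset.mem_univ, true_and]
      omega
    rw [hFeq, Finset.card_sdiff_of_subset (Finset.filter_subset _ _),
      filter_lt_card' k (δ - 1) (by omega), Finset.card_univ, Fintype.card_fin]
  have key : ∀ u ∈ I, ∃ i ∈ F, G.Adj (v i) u := by
    intro u hu
    set T := Finset.univ.filter (fun i : Fin k => G.Adj (v i) u) with hT
    have hsub : G.neighborFinset u ⊆ T.image v := by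
      intro w hw
      have hwJ : w ∈ Finset.univ \ I := by
        rw [Finset.mem_sdiff]
        refine ⟨Finset.mem_univ _, fun hwI => ?_⟩
        exact hI u hu w hwI ((G.mem_neighborFinset _ _).mp hw)
      rw [← himg] at hwJ
      obtain ⟨i, -, rfl⟩ := Finset.mem_image.mp hwJ
      exact Finset.mem_image_of_mem v (Finset.mem_filter.mpr
        ⟨Finset.mem_univ _, ((G.mem_neighborFinset _ _).mp hw).symm⟩)
    have hδT : δ ≤ T.card := by
      calc δ ≤ G.degree u := hdeg u
        _ = (G.neighborFinset u).card := rfl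
        _ ≤ (T.image v).card := Finset.card_le_card hsub
        _ ≤ T.card := Finset.card_image_le
    by_contra hcon
    push_neg at hcon
    have hTsub : T ⊆ Finset.univ.filter (fun i : Fin k => i.val < δ - 1) := by
      intro i hi
      rcases Finset.mem_filter.mp hi with ⟨-, hadj⟩
      refine Finset.mem_filter.mpr ⟨Finset.mem_univ _, ?_⟩
      by_contra h
      push_neg at h
      exact hcon i (Finset.mem_filter.mpr ⟨Finset.mem_univ _, h⟩) hadj
    have hle := Finset.card_le_card hTsub
    rw [filter_lt_card' k (δ - 1) (by omega)] at hle
    omega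
  have hsum1 : (n - k : ℕ) ≤ ∑ i ∈ F, a i := by
    calc (n - k : ℕ) = I.card := hIcard.symm
      _ = ∑ _u ∈ I, 1 := by simp
      _ ≤ ∑ u ∈ I, ∑ i ∈ F, (if G.Adj (v i) u then 1 else 0) := by
          apply Finset.sum_le_sum
          intro u hu
          obtain ⟨i, hiF, hadj⟩ := key u hu
          have h1 := Finset.single_le_sum
            (f := fun j => if G.Adj (v j) u then (1 : ℕ) else 0)
            (fun j _ => Nat.zero_le _) hiF
          simpa [hadj] using h1
      _ = ∑ i ∈ F, ∑ u ∈ I, (if G.Adj (v i) u then 1 else 0) := Finset.sum_comm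
      _ = ∑ i ∈ F, a i := by
          apply Finset.sum_congr rfl
          intro i _
          have hset : G.neighborFinset (v i) ∩ I
              = I.filter (fun u => G.Adj (v i) u) := by
            ext u
            simp [and_comm]
          rw [ha i, hset, Finset.card_filter]
  have hsum2 : ∑ i ∈ F, a i ≤ (k - (δ - 1)) * a idx := by
    rw [← hFcard, ← smul_eq_mul]
    apply Finset.sum_le_card_nsmul
    intro i hi
    apply hmono
    rw [Fin.le_def]
    exact (Finset.mem_filter.mp hi).2
  have hfin : (n - k : ℕ) ≤ (k - (δ - 1)) * a idx := le_trans hsum1 hsum2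
  have hδk : (δ : ℝ) ≤ (k : ℝ) := by exact_mod_cast (by omega : δ ≤ k)
  have hpos : (0 : ℝ) < (k : ℝ) - δ + 1 := by linarith
  rw [div_le_iff₀ hpos]
  have hcast : ((k - (δ - 1) : ℕ) : ℝ) = (k : ℝ) - δ + 1 := by
    have h1 : (k - (δ - 1) : ℕ) = k - δ + 1 := by omega
    rw [h1, Nat.cast_add, Nat.cast_sub (by omega : δ ≤ k)]
    norm_num
  have hcast2 : ((n - k : ℕ) : ℝ) = (n : ℝ) - k := Nat.cast_sub (by omega : k ≤ n)
  have hR := (Nat.cast_le (α := ℝ)).mpr hfin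
  rw [hcast2, Nat.cast_mul, hcast] at hR
  calc ((n : ℝ) - k) ≤ ((k : ℝ) - δ + 1) * a idx := hR
    _ = a idx * ((k : ℝ) - δ + 1) := by ring
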